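/- Let M₀ be an m×n integer matrix that is minimal in its Hadamard equivalence class with respect to the row-lex ordering, and let Q be an n×n signed permutation matrix. Then Ord(Neg(M₀·Q)) = M₀. -/

import Mathlib

open Matrix

/-- A signed permutation (monomial) matrix: a square integer matrix with entries in
`{-1, 0, 1}` having exactly one nonzero entry in each row and each column. -/
def IsSignedPerm {m : ℕ} (P : Matrix (Fin m) (Fin m) ℤ) : Prop :=
  (∀ i j, P i j = -1 ∨ P i j = 0 ∨ P i j = 1) ∧
  (∀ i, ∃! j, P i j ≠ 0) ∧
  (∀ j, ∃! i, P i j ≠ 0)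

/-- Hadamard equivalence: `N = P * M * Q` for signed permutation matrices `P`, `Q`. -/
def HadamardEquiv {m n : ℕ} (M N : Matrix (Fin m) (Fin n) ℤ) : Prop :=
  ∃ P : Matrix (Fin m) (Fin m) ℤ, ∃ Q : Matrix (Fin n) (Fin n) ℤ,
    IsSignedPerm P ∧ IsSignedPerm Q ∧ N = P * M * Q

/-- The row-lex ordering: compare matrices lexicographically row by row, rows being
compared lexicographically entry by entry. -/
def rowLexLe {m n : ℕ} (M N : Matrix (Fin m) (Fin n) ℤ) : Prop :=
  toLex (fun i => toLex (M i)) ≤ toLex (fun i => toLex (N i))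

/-- `M` is minimal in its Hadamard equivalence class with respect to row-lex order. -/
def IsRowLexMinimal {m n : ℕ} (M : Matrix (Fin m) (Fin n) ℤ) : Prop :=
  ∀ N, HadamardEquiv M N → rowLexLe M N

/-- A vector begins with a positive entry: its first nonzero coordinate is positive. -/
def BeginsPos {k : ℕ} (v : Fin k → ℤ) : Prop :=
  ∃ j : Fin k, 0 < v j ∧ ∀ i : Fin k, i < j → v i = 0

/-- `NegCols M` is obtained from `M` by negating every column whose first nonzero
entry is positive. -/
noncomputable def NegCols {m n : ℕ} (M : Matrix (Fin m) (Fin n) ℤ) :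
    Matrix (Fin m) (Fin n) ℤ :=
  haveI := Classical.propDecidable
  Matrix.of fun i j => if BeginsPos (fun r => M r j) then -M i j else M i j

/-- `OrdCols M` is obtained from `M` by permuting its columns so that they appear from
left to right in weakly increasing lexicographic order. -/
noncomputable def OrdCols {m n : ℕ} (M : Matrix (Fin m) (Fin n) ℤ) :
    Matrix (Fin m) (Fin n) ℤ :=
  letI : LinearOrder (Lex (Fin m → ℤ)) :=
    @Pi.Lex.linearOrder (Fin m) (fun _ => ℤ)
      inferInstance (inferInstance : WellFoundedLT (Fin m)) (fun _ => inferInstance)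
  Matrix.of fun i j => M i (Tuple.sort (fun c => toLex (fun r => M r c)) j)

/-!
Negating columns and sorting them are right multiplications by signed permutation matrices, so
`S = Ord(Neg(M₀ Q))` is Hadamard equivalent to `M₀` and minimality gives `M₀ ≤ S`. Conversely,
`Neg` only depends on a column up to sign, so the columns of `S` are those of `Neg(M₀)` in sorted
order. A matrix with sorted columns is row-lex below every column permutation of itself, and `Neg`
only decreases columns, whence `S ≤ Neg(M₀) ≤ M₀`.
-/

lemma Monotone.le_apply_perm_of_forall_lt {ι α : Type*} [LinearOrder ι] [Fintype ι]
    [LinearOrder α] {f : ι → α} (hf : Monotone f) (σ : Equiv.Perm ι) {j₀ : ι}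
    (h : ∀ j < j₀, f (σ j) = f j) : f j₀ ≤ f (σ j₀) := by
  classical
  by_contra! hlt
  -- `σ` would map the values below `f j₀`, together with `j₀`, injectively into themselves
  set s := Finset.univ.filter fun j => f j < f j₀
  have hmaps : ∀ j ∈ insert j₀ s, σ j ∈ s := by
    intro j hj
    rcases Finset.mem_insert.1 hj with rfl | hj
    · simpa [s] using hlt
    · have hjs : f j < f j₀ := (Finset.mem_filter.1 hj).2
      have hj₀ : j < j₀ := lt_of_not_ge fun hle => (hf hle).not_gt hjs
      simpa [s, h j hj₀] using hjs
  have hcard := Finset.card_le_card_of_injOn σ hmaps σ.injective.injOn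
  rw [Finset.card_insert_of_notMem (by simp [s])] at hcard
  omega

lemma toLex_truncate_le_of_le {ι β : Type*} [LinearOrder ι] [PartialOrder β] (k : ι) (c : β)
    {v w : ι → β} (hvw : toLex v ≤ toLex w) :
    toLex (fun i => if i ≤ k then v i else c) ≤ toLex (fun i => if i ≤ k then w i else c) := by
  rcases hvw.lt_or_eq with ⟨i₁, hagree, hlt⟩ | heq
  · by_cases hi₁ : i₁ ≤ k
    · refine le_of_lt ⟨i₁, fun i hi => ?_, by simpa [hi₁] using hlt⟩
      simp only [Pi.toLex_apply, show v i = w i from hagree i hi]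
    · refine le_of_eq (congrArg toLex (funext fun i => ?_))
      split_ifs with hi
      · exact hagree i (lt_of_le_of_lt hi (not_le.1 hi₁))
      · rfl
  · rw [toLex.injective heq]

section RowLex

variable {m n : ℕ}

lemma rowLexLe_antisymm {A B : Matrix (Fin m) (Fin n) ℤ} (hAB : rowLexLe A B)
    (hBA : rowLexLe B A) : A = B :=
  have h := le_antisymm (α := Lex (Fin m → Lex (Fin n → ℤ))) hAB hBA
  funext fun i => funext fun j => congrFun (congrFun h i) j

lemma rowLexLe_of_forall_first_diff_le {A B : Matrix (Fin m) (Fin n) ℤ}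
    (h : ∀ i₀ j₀, (∀ i < i₀, B i = A i) → (∀ j < j₀, B i₀ j = A i₀ j) → A i₀ j₀ ≤ B i₀ j₀) :
    rowLexLe A B :=
  not_lt.1 fun ⟨i₀, hrows, j₀, hcols, hlt⟩ => (h i₀ j₀ hrows hcols).not_gt hlt

lemma rowLexLe_of_forall_col_le {A B : Matrix (Fin m) (Fin n) ℤ}
    (h : ∀ j, toLex (fun i => A i j) ≤ toLex (fun i => B i j)) : rowLexLe A B :=
  rowLexLe_of_forall_first_diff_le fun _ j₀ hrows _ =>
    Pi.apply_le_of_toLex (x := fun i => A i j₀) (h j₀) fun i hi => congrFun (hrows i hi).symm j₀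

lemma rowLexLe_submatrix_of_monotone {A : Matrix (Fin m) (Fin n) ℤ}
    (hA : Monotone fun j => toLex fun i => A i j) (σ : Equiv.Perm (Fin n)) :
    rowLexLe A (A.submatrix id σ) := by
  refine rowLexLe_of_forall_first_diff_le fun i₀ j₀ hrows hcols => ?_
  by_contra! hlt
  -- compare the columns of `A` only down to row `i₀`
  set P : Fin n → Lex (Fin m → ℤ) := fun j => toLex fun i => if i ≤ i₀ then A i j else 0
  have hP : Monotone P := fun j j' hjj' => toLex_truncate_le_of_le i₀ 0 (hA hjj')
  have hagree : ∀ j < j₀, P (σ j) = P j := fun j hj => congrArg toLex <| funext fun i => by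
    split_ifs with hi
    · rcases hi.lt_or_eq with hi | rfl
      exacts [congrFun (hrows i hi) j, hcols j hj]
    · rfl
  refine (hP.le_apply_perm_of_forall_lt σ hagree).not_gt ⟨i₀, fun i hi => ?_, ?_⟩
  · show (if i ≤ i₀ then A i (σ j₀) else 0) = if i ≤ i₀ then A i j₀ else 0
    rw [if_pos hi.le, if_pos hi.le]
    exact congrFun (hrows i hi) j₀
  · show (if i₀ ≤ i₀ then A i₀ (σ j₀) else 0) < if i₀ ≤ i₀ then A i₀ j₀ else 0
    simpa using hlt

end RowLex

section BeginsPos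

variable {k : ℕ}

lemma BeginsPos.not_neg {v : Fin k → ℤ} (hv : BeginsPos v) : ¬ BeginsPos (-v) := by
  rintro ⟨j', hpos', hzero'⟩
  obtain ⟨j, hpos, hzero⟩ := hv
  rcases lt_trichotomy j j' with h | rfl | h
  · have := hzero' j h
    simp only [Pi.neg_apply, neg_eq_zero] at this
    omega
  · simp only [Pi.neg_apply] at hpos'
    omega
  · have := hzero j' h
    simp only [Pi.neg_apply] at hpos'
    omega

lemma beginsPos_or_beginsPos_neg {v : Fin k → ℤ} (hv : v ≠ 0) :
    BeginsPos v ∨ BeginsPos (-v) := by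
  obtain ⟨j, hj, hmin⟩ := wellFounded_lt.has_min {i | v i ≠ 0} (Function.ne_iff.1 hv)
  have hzero : ∀ i < j, v i = 0 := fun i hi => not_not.1 fun hi' => hmin i hi' hi
  rcases lt_or_gt_of_ne hj with hneg | hpos
  · exact Or.inr ⟨j, by simpa using hneg, fun i hi => by simp [hzero i hi]⟩
  · exact Or.inl ⟨j, hpos, hzero⟩

noncomputable def negIfBeginsPos (v : Fin k → ℤ) : Fin k → ℤ :=
  haveI := Classical.propDecidable
  if BeginsPos v then -v else v

lemma negIfBeginsPos_neg (v : Fin k → ℤ) : negIfBeginsPos (-v) = negIfBeginsPos v := by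
  classical
  by_cases hv : v = 0
  · rw [hv, neg_zero]
  rcases beginsPos_or_beginsPos_neg hv with h | h
  · simp [negIfBeginsPos, h, h.not_neg]
  · have := h.not_neg
    rw [neg_neg] at this
    simp [negIfBeginsPos, h, this]

lemma toLex_negIfBeginsPos_le (v : Fin k → ℤ) : toLex (negIfBeginsPos v) ≤ toLex v := by
  by_cases hv : BeginsPos v
  · rw [negIfBeginsPos, if_pos hv]
    obtain ⟨j, hpos, hzero⟩ := hv
    exact le_of_lt ⟨j, fun i hi => by simp [hzero i hi], by simpa using hpos⟩
  · rw [negIfBeginsPos, if_neg hv]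

end BeginsPos

section SignedPerm

variable {m n : ℕ}

def signedPermMatrix (ρ : Equiv.Perm (Fin n)) (s : Fin n → ℤ) : Matrix (Fin n) (Fin n) ℤ :=
  Matrix.of fun k c => if k = ρ c then s c else 0

lemma isSignedPerm_signedPermMatrix (ρ : Equiv.Perm (Fin n)) {s : Fin n → ℤ}
    (hs : ∀ c, s c = 1 ∨ s c = -1) : IsSignedPerm (signedPermMatrix ρ s) := by
  have hs0 : ∀ c, s c ≠ 0 := fun c => by rcases hs c with h | h <;> simp [h]
  refine ⟨fun k c => ?_, fun k => ⟨ρ.symm k, ?_, fun c hc => ?_⟩, fun c => ⟨ρ c, ?_, fun k hk => ?_⟩⟩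
  · by_cases h : k = ρ c
    · rcases hs c with hc | hc <;> simp [signedPermMatrix, h, hc]
    · simp [signedPermMatrix, h]
  · simp [signedPermMatrix, hs0]
  · by_contra h
    have hk : k ≠ ρ c := fun hk => h (by simp [hk])
    exact hc (by simp [signedPermMatrix, hk])
  · simp [signedPermMatrix, hs0]
  · by_contra h
    exact hk (by simp [signedPermMatrix, h])

lemma IsSignedPerm.exists_eq_signedPermMatrix {Q : Matrix (Fin n) (Fin n) ℤ}
    (hQ : IsSignedPerm Q) :
    ∃ ρ s, (∀ c, s c = 1 ∨ s c = -1) ∧ Q = signedPermMatrix ρ s := by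
  choose f hf hu using hQ.2.2
  have hinj : Function.Injective f := fun c c' hcc' =>
    (hQ.2.1 (f c)).unique (hf c) (hcc' ▸ hf c')
  let ρ := Equiv.ofBijective f hinj.bijective_of_finite
  refine ⟨ρ, fun c => Q (ρ c) c, fun c => ?_, ?_⟩
  · rcases hQ.1 (f c) c with h | h | h
    exacts [Or.inr h, absurd h (hf c), Or.inl h]
  · ext k c
    by_cases hk : k = f c
    · simp [signedPermMatrix, ρ, hk]
    · simp only [signedPermMatrix, ρ, Equiv.ofBijective_apply, of_apply, if_neg hk]
      exact not_not.1 fun h => hk (hu c k h)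

lemma mul_signedPermMatrix_apply (M : Matrix (Fin m) (Fin n) ℤ) (ρ : Equiv.Perm (Fin n))
    (s : Fin n → ℤ) (i : Fin m) (c : Fin n) :
    (M * signedPermMatrix ρ s) i c = s c * M i (ρ c) := by
  simp [mul_apply, signedPermMatrix, mul_comm]

lemma IsSignedPerm.mul {A B : Matrix (Fin n) (Fin n) ℤ} (hA : IsSignedPerm A)
    (hB : IsSignedPerm B) : IsSignedPerm (A * B) := by
  obtain ⟨ρ, s, hs, rfl⟩ := hA.exists_eq_signedPermMatrix
  obtain ⟨ρ', s', hs', rfl⟩ := hB.exists_eq_signedPermMatrix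
  have : signedPermMatrix ρ s * signedPermMatrix ρ' s' =
      signedPermMatrix (ρ'.trans ρ) fun c => s' c * s (ρ' c) := by
    ext k c
    rw [mul_signedPermMatrix_apply]
    by_cases h : k = ρ (ρ' c) <;> simp [signedPermMatrix, h]
  rw [this]
  refine isSignedPerm_signedPermMatrix _ fun c => ?_
  rcases hs' c with h' | h' <;> rcases hs (ρ' c) with h | h <;> simp [h, h']

lemma isSignedPerm_one : IsSignedPerm (1 : Matrix (Fin n) (Fin n) ℤ) := by
  have : (1 : Matrix (Fin n) (Fin n) ℤ) = signedPermMatrix 1 1 := by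
    ext k c
    by_cases h : k = c <;> simp [signedPermMatrix, one_apply, h]
  rw [this]
  exact isSignedPerm_signedPermMatrix 1 fun _ => Or.inl rfl

lemma hadamardEquiv_mul_right (M : Matrix (Fin m) (Fin n) ℤ) {Q : Matrix (Fin n) (Fin n) ℤ}
    (hQ : IsSignedPerm Q) : HadamardEquiv M (M * Q) :=
  ⟨1, Q, isSignedPerm_one, hQ, by rw [Matrix.one_mul]⟩

end SignedPerm

section ColumnOperations

variable {m n : ℕ}

lemma negCols_apply (M : Matrix (Fin m) (Fin n) ℤ) (i : Fin m) (j : Fin n) :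
    NegCols M i j = negIfBeginsPos (fun r => M r j) i := by
  rw [NegCols, negIfBeginsPos, of_apply]
  split_ifs <;> rfl

lemma rowLexLe_negCols (M : Matrix (Fin m) (Fin n) ℤ) : rowLexLe (NegCols M) M :=
  rowLexLe_of_forall_col_le fun j => by
    simpa only [negCols_apply] using toLex_negIfBeginsPos_le fun r => M r j

lemma exists_negCols_eq_mul (M : Matrix (Fin m) (Fin n) ℤ) :
    ∃ D : Matrix (Fin n) (Fin n) ℤ, IsSignedPerm D ∧ NegCols M = M * D := by
  classical
  let e : Fin n → ℤ := fun j => if BeginsPos (fun r => M r j) then -1 else 1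
  refine ⟨signedPermMatrix 1 e, isSignedPerm_signedPermMatrix 1 fun j => ?_, ?_⟩
  · by_cases h : BeginsPos (fun r => M r j) <;> simp [e, h]
  · ext i j
    rw [negCols_apply, mul_signedPermMatrix_apply]
    by_cases h : BeginsPos (fun r => M r j) <;> simp [negIfBeginsPos, e, h]

lemma negCols_mul_signedPermMatrix (M : Matrix (Fin m) (Fin n) ℤ) (ρ : Equiv.Perm (Fin n))
    {s : Fin n → ℤ} (hs : ∀ c, s c = 1 ∨ s c = -1) :
    NegCols (M * signedPermMatrix ρ s) = (NegCols M).submatrix id ρ := by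
  ext i c
  simp only [submatrix_apply, id, negCols_apply, mul_signedPermMatrix_apply]
  rcases hs c with h | h
  · simp [h]
  · simp only [h, neg_one_mul]
    exact congrFun (negIfBeginsPos_neg fun r => M r (ρ c)) i

lemma exists_ordCols_eq_submatrix (M : Matrix (Fin m) (Fin n) ℤ) :
    ∃ τ : Equiv.Perm (Fin n), OrdCols M = M.submatrix id τ :=
  ⟨_, rfl⟩

lemma monotone_ordCols_col (M : Matrix (Fin m) (Fin n) ℤ) :
    Monotone fun j => toLex fun i => OrdCols M i j := by
  let : LinearOrder (Lex (Fin m → ℤ)) :=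
    @Pi.Lex.linearOrder (Fin m) (fun _ => ℤ)
      inferInstance (inferInstance : WellFoundedLT (Fin m)) (fun _ => inferInstance)
  exact Tuple.monotone_sort fun c => toLex fun r => M r c

lemma exists_ordCols_eq_mul (M : Matrix (Fin m) (Fin n) ℤ) :
    ∃ D : Matrix (Fin n) (Fin n) ℤ, IsSignedPerm D ∧ OrdCols M = M * D := by
  obtain ⟨τ, hτ⟩ := exists_ordCols_eq_submatrix M
  refine ⟨signedPermMatrix τ 1, isSignedPerm_signedPermMatrix τ fun _ => Or.inl rfl, ?_⟩
  ext i j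
  simp [hτ, mul_signedPermMatrix_apply]

end ColumnOperations

/-- If `M₀` is minimal in its Hadamard equivalence class with respect to
the row-lex ordering and `Q` is a signed permutation matrix, then
`Ord(Neg(M₀ * Q)) = M₀`. -/
theorem ord_neg_of_minimal_mul_signedPerm {m n : ℕ} (M₀ : Matrix (Fin m) (Fin n) ℤ)
    (hmin : IsRowLexMinimal M₀) (Q : Matrix (Fin n) (Fin n) ℤ) (hQ : IsSignedPerm Q) :
    OrdCols (NegCols (M₀ * Q)) = M₀ := by
  obtain ⟨ρ, s, hs, rfl⟩ := hQ.exists_eq_signedPermMatrix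
  obtain ⟨D₁, hD₁, hneg⟩ := exists_negCols_eq_mul (M₀ * signedPermMatrix ρ s)
  obtain ⟨D₂, hD₂, hord⟩ := exists_ordCols_eq_mul (NegCols (M₀ * signedPermMatrix ρ s))
  obtain ⟨τ, hτ⟩ := exists_ordCols_eq_submatrix (NegCols (M₀ * signedPermMatrix ρ s))
  have hequiv : HadamardEquiv M₀ (OrdCols (NegCols (M₀ * signedPermMatrix ρ s))) := by
    rw [hord, hneg, Matrix.mul_assoc, Matrix.mul_assoc]
    exact hadamardEquiv_mul_right M₀ (hQ.mul (hD₁.mul hD₂))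
  have hsorted : NegCols M₀ =
      (OrdCols (NegCols (M₀ * signedPermMatrix ρ s))).submatrix id (τ.trans ρ).symm := by
    rw [hτ, negCols_mul_signedPermMatrix M₀ ρ hs]
    ext i j
    simp
  have hle : rowLexLe (OrdCols (NegCols (M₀ * signedPermMatrix ρ s))) (NegCols M₀) := by
    rw [hsorted]
    exact rowLexLe_submatrix_of_monotone (monotone_ordCols_col _) _
  exact rowLexLe_antisymm (le_trans hle (rowLexLe_negCols M₀)) (hmin _ hequiv)
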